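/- Let f, g, h be entire functions satisfying conditions (F), (G), (H) respectively. Then the composite h∘g∘f satisfies: |(h∘g∘f)(z) - 2| < 1/2 for all z ∈ E_0; |(h∘g∘f)(z) + 14| < 1/2 for all z ∈ G_k for every k >= 1; and |(h∘g∘f)(z) + (4k+14)| < 1/2 for all z ∈ B_k for every k >= 1. -/

import Mathlib

open Complex Metric

noncomputable section

/-- `Gset k` is the set `G_k` for `k ≥ 1`. -/
def Gset (k : ℕ) : Set ℂ :=
  {z | ‖(z - (4*(k:ℂ)+2))‖ ≤ 1} ∪
  {z | z.re = 4*(k:ℝ)+2 ∧ 1 ≤ z.im} ∪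
  {z | z.re = 4*(k:ℝ)+2 ∧ z.im ≤ -1}

/-- `Bset k` is the set `B_k` for `k ≥ 1`. -/
def Bset (k : ℕ) : Set ℂ :=
  {z | ‖(z + (4*(k:ℂ)+2))‖ ≤ 1} ∪
  {z | z.re = -(4*(k:ℝ)+2) ∧ 1 ≤ z.im} ∪
  {z | z.re = -(4*(k:ℝ)+2) ∧ z.im ≤ -1}

/-- `Lset k` is the vertical line `Re z = 4k`. -/
def Lset (k : ℕ) : Set ℂ := {z | z.re = 4*(k:ℝ)}

/-- `Mset k` is the vertical line `Re z = -4k`. -/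
def Mset (k : ℕ) : Set ℂ := {z | z.re = -(4*(k:ℝ))}

/-- `G0` is the closed disk `|z - 2| ≤ 1`. -/
def G0 : Set ℂ := {z | ‖(z - 2)‖ ≤ 1}

/-- `E0 = G_0 ∪ ⋃_{k ≥ 1} (L_k ∪ M_k)`. -/
def E0 : Set ℂ := G0 ∪ ⋃ k ∈ Set.Ici 1, (Lset k ∪ Mset k)

/-- Condition (F). -/
def CondF (f : ℂ → ℂ) : Prop :=
  (∀ z ∈ E0, ‖(f z - 2)‖ < 1/2) ∧
  (∀ k : ℕ, 1 ≤ k → ∀ z ∈ Gset k, ‖(f z + 6)‖ < 1/2) ∧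
  (∀ k : ℕ, 1 ≤ k → ∀ z ∈ Bset k, ‖(f z + (4*(k:ℂ)+6))‖ < 1/2)

/-- Condition (G). -/
def CondG (g : ℂ → ℂ) : Prop :=
  (∀ z ∈ E0, ‖(g z - 2)‖ < 1/2) ∧
  (∀ z ∈ Gset 1, ‖(g z + 6)‖ < 1/2) ∧
  (∀ k : ℕ, 2 ≤ k → ∀ z ∈ Gset k, ‖(g z - (4*(k:ℂ)-2))‖ < 1/2) ∧
  (∀ k : ℕ, 1 ≤ k → ∀ z ∈ Bset k, ‖(g z + (4*(k:ℂ)+6))‖ < 1/2)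

/-- Condition (H). -/
def CondH (h : ℂ → ℂ) : Prop :=
  (∀ z ∈ E0, ‖(h z - 2)‖ < 1/2) ∧
  (∀ z ∈ Gset 1, ‖(h z + 10)‖ < 1/2) ∧
  (∀ z ∈ Gset 2, ‖(h z + 6)‖ < 1/2) ∧
  (∀ k : ℕ, 3 ≤ k → ∀ z ∈ Gset k, ‖(h z - (4*(k:ℂ)-6))‖ < 1/2) ∧
  (∀ k : ℕ, 1 ≤ k → ∀ z ∈ Bset k, ‖(h z + (4*(k:ℂ)+6))‖ < 1/2)

/-!
Each of `f`, `g`, `h` sends `E₀` into the disk of radius `1/2` about `2`, which lies in `G₀ ⊆ E₀`,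
and sends `B_k` into the disk of radius `1/2` about `-(4k+6)`, the centre of `B_{k+1}`. Hence `f`
and `g` move `B_k` to `B_{k+1}` and then `B_{k+2}`, where `h` takes values near `-(4k+14)`; and `f`
sends each `G_k` near `-6`, i.e. into `B_1`, so that `g` and `h` then end near `-14`.
-/

lemma mem_E0_of_norm_sub_two_lt {w : ℂ} (hw : ‖w - 2‖ < 1/2) : w ∈ E0 :=
  Or.inl (show ‖w - 2‖ ≤ 1 by linarith)

lemma mapsTo_E0 {φ : ℂ → ℂ} (hφ : ∀ z ∈ E0, ‖φ z - 2‖ < 1/2) : Set.MapsTo φ E0 E0 :=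
  fun z hz => mem_E0_of_norm_sub_two_lt (hφ z hz)

lemma mem_Bset_succ_of_norm_lt {k : ℕ} {w : ℂ} (hw : ‖w + (4 * (k : ℂ) + 6)‖ < 1/2) :
    w ∈ Bset (k + 1) := by
  refine Or.inl (Or.inl (show ‖w + (4 * ((k + 1 : ℕ) : ℂ) + 2)‖ ≤ 1 from ?_))
  have hcentre : 4 * ((k + 1 : ℕ) : ℂ) + 2 = 4 * (k : ℂ) + 6 := by push_cast; ring
  rw [hcentre]
  linarith

lemma mapsTo_Bset_succ {φ : ℂ → ℂ} {k : ℕ}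
    (hφ : ∀ z ∈ Bset k, ‖φ z + (4 * (k : ℂ) + 6)‖ < 1/2) :
    Set.MapsTo φ (Bset k) (Bset (k + 1)) :=
  fun z hz => mem_Bset_succ_of_norm_lt (hφ z hz)

lemma CondF.mapsTo_Gset_Bset_one {f : ℂ → ℂ} (hF : CondF f) {k : ℕ} (hk : 1 ≤ k) :
    Set.MapsTo f (Gset k) (Bset 1) := fun z hz =>
  mem_Bset_succ_of_norm_lt (k := 0) (by simpa using hF.2.1 k hk z hz)

theorem comp_hgf_general (f g h : ℂ → ℂ)
    (hF : CondF f) (hG : CondG g) (hH : CondH h) :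
    (∀ z ∈ E0, ‖((h ∘ g ∘ f) z - 2)‖ < 1/2) ∧
    (∀ k : ℕ, 1 ≤ k → ∀ z ∈ Gset k, ‖((h ∘ g ∘ f) z + 14)‖ < 1/2) ∧
    (∀ k : ℕ, 1 ≤ k → ∀ z ∈ Bset k, ‖((h ∘ g ∘ f) z + (4*(k:ℂ)+14))‖ < 1/2) := by
  have hgB : ∀ k, 1 ≤ k → Set.MapsTo g (Bset k) (Bset (k + 1)) := fun k hk =>
    mapsTo_Bset_succ (hG.2.2.2 k hk)
  refine ⟨fun z hz => hH.1 _ (mapsTo_E0 hG.1 (mapsTo_E0 hF.1 hz)), ?_, ?_⟩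
  · intro k hk z hz
    have hgfz : g (f z) ∈ Bset 2 := hgB 1 le_rfl (hF.mapsTo_Gset_Bset_one hk hz)
    have hcentre : (14 : ℂ) = 4 * ((2 : ℕ) : ℂ) + 6 := by norm_num
    rw [hcentre]
    exact hH.2.2.2.2 2 (by norm_num) _ hgfz
  · intro k hk z hz
    have hgfz : g (f z) ∈ Bset (k + 2) :=
      hgB (k + 1) (by omega) (mapsTo_Bset_succ (hF.2.2 k hk) hz)
    have hcentre : 4 * (k : ℂ) + 14 = 4 * ((k + 2 : ℕ) : ℂ) + 6 := by push_cast; ring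
    rw [hcentre]
    exact hH.2.2.2.2 (k + 2) (by omega) _ hgfz

theorem comp_hgf (f g h : ℂ → ℂ)
    (hf : Differentiable ℂ f) (hg : Differentiable ℂ g) (hh : Differentiable ℂ h)
    (hF : CondF f) (hG : CondG g) (hH : CondH h) :
    (∀ z ∈ E0, ‖((h ∘ g ∘ f) z - 2)‖ < 1/2) ∧
    (∀ k : ℕ, 1 ≤ k → ∀ z ∈ Gset k, ‖((h ∘ g ∘ f) z + 14)‖ < 1/2) ∧
    (∀ k : ℕ, 1 ≤ k → ∀ z ∈ Bset k, ‖((h ∘ g ∘ f) z + (4*(k:ℂ)+14))‖ < 1/2) :=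
  comp_hgf_general f g h hF hG hH
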